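/- Let c, γ > 0 and suppose y : [t₀, t*] → (0, e^{−1/c}] is positive, differentiable, and satisfies y'(t) ≤ (c log y(t) + 1) y(t). If c·(−log y(t₀)) > 1, then y(t) ≤ exp(−1/c) · exp( −(1/c)(c(−log y(t₀)) − 1) e^{c(t−t₀)} ) for all t ∈ [t₀, t*]; i.e., y decays at least double-exponentially in time. -/

import Mathlib

/-!
With `z = -log y` the hypothesis `y' ≤ (c log y + 1) y` becomes the linear inequality
`z' ≥ c z - 1`, and Grönwall's inequality (applied to `-z`) gives
`z(t) ≥ (z(t₀) - 1/c) e^{c(t - t₀)} + 1/c`. Exponentiating `log y = -z` gives the bound.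
-/

open Real Set

theorem gronwallBound_neg (δ K ε x : ℝ) :
    gronwallBound (-δ) K (-ε) x = -gronwallBound δ K ε x := by
  unfold gronwallBound
  split_ifs <;> ring

theorem gronwallBound_le_of_le_deriv {f f' : ℝ → ℝ} {δ K ε a b : ℝ}
    (hf : ContinuousOn f (Icc a b)) (hf' : ∀ x ∈ Ico a b, HasDerivWithinAt f (f' x) (Ici x) x)
    (ha : δ ≤ f a) (bound : ∀ x ∈ Ico a b, K * f x + ε ≤ f' x) :
    ∀ x ∈ Icc a b, gronwallBound δ K ε (x - a) ≤ f x := by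
  intro x hx
  have h := le_gronwallBound_of_liminf_deriv_right_le (f := fun t => -f t) (f' := fun t => -f' t)
    (δ := -δ) (K := K) (ε := -ε) hf.neg (fun t ht _ hr => (hf' t ht).neg.liminf_right_slope_le hr)
    (neg_le_neg ha) (fun t ht => by linarith [bound t ht]) x hx
  rw [gronwallBound_neg] at h
  exact neg_le_neg_iff.mp h

theorem mul_neg_log_sub_one_le_neg_div {c u u' : ℝ} (hu : 0 < u)
    (h : u' ≤ (c * log u + 1) * u) : c * (-log u) + -1 ≤ -(u' / u) := by
  have : u' / u ≤ c * log u + 1 := (div_le_iff₀ hu).2 h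
  linarith

theorem stmt_10_general (c t₀ tS : ℝ) (hc : 0 < c)
    (y y' : ℝ → ℝ)
    (hy : ∀ t ∈ Icc t₀ tS, 0 < y t ∧ y t ≤ Real.exp (-1 / c))
    (hderiv : ∀ t ∈ Icc t₀ tS, HasDerivAt y (y' t) t)
    (hineq : ∀ t ∈ Icc t₀ tS, y' t ≤ (c * Real.log (y t) + 1) * y t) :
    ∀ t ∈ Icc t₀ tS,
      y t ≤ Real.exp (-1 / c) *
        Real.exp (-(1 / c) * (c * (-Real.log (y t₀)) - 1) * Real.exp (c * (t - t₀))) := by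
  intro t ht
  have hlog_deriv : ∀ s ∈ Icc t₀ tS, HasDerivAt (fun s => -log (y s)) (-(y' s / y s)) s :=
    fun s hs => ((hderiv s hs).log (hy s hs).1.ne').neg
  have hz := gronwallBound_le_of_le_deriv (K := c) (ε := -1)
    (fun s hs => (hlog_deriv s hs).continuousAt.continuousWithinAt)
    (fun s hs => (hlog_deriv s (Ico_subset_Icc_self hs)).hasDerivWithinAt) le_rfl
    (fun s hs => mul_neg_log_sub_one_le_neg_div (hy s (Ico_subset_Icc_self hs)).1
      (hineq s (Ico_subset_Icc_self hs))) t ht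
  rw [gronwallBound_of_K_ne_0 hc.ne'] at hz
  calc y t = exp (log (y t)) := (exp_log (hy t ht).1).symm
    _ ≤ _ := exp_le_exp.2 (le_neg.2 hz)
    _ = _ := by
      rw [← exp_add]
      congr 1
      field_simp
      ring

theorem stmt_10 (c γ t₀ tS : ℝ) (hc : 0 < c) (hγ : 0 < γ) (ht : t₀ ≤ tS)
    (y y' : ℝ → ℝ)
    (hy : ∀ t ∈ Icc t₀ tS, 0 < y t ∧ y t ≤ Real.exp (-1 / c))
    (hderiv : ∀ t ∈ Icc t₀ tS, HasDerivAt y (y' t) t)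
    (hineq : ∀ t ∈ Icc t₀ tS, y' t ≤ (c * Real.log (y t) + 1) * y t)
    (hinit : 1 < c * (-Real.log (y t₀))) :
    ∀ t ∈ Icc t₀ tS,
      y t ≤ Real.exp (-1 / c) *
        Real.exp (-(1 / c) * (c * (-Real.log (y t₀)) - 1) * Real.exp (c * (t - t₀))) :=
  stmt_10_general c t₀ tS hc y y' hy hderiv hineq
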